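/- Let $M$ be a compact metric space and $f\colon M\to M$ a homeomorphism. Then $B(f,C^0(M)) = \{u\circ f - u : u\in C^0(M)\}$ is closed in $C^0(M)$ if and only if $f$ is periodic, i.e. $f^q=\mathrm{id}_M$ for some positive integer $q$. -/

import Mathlib

/-!
If `f^[q] = id`, a continuous `φ` is a coboundary exactly when its Birkhoff sums of length `q`
vanish, which is a closed condition; a transfer function is minus the average of the first `q`
Birkhoff sums.

Conversely, if the coboundaries are closed, the open mapping theorem yields transfer functions
`v` with `‖v‖ ≤ C ‖v ∘ f - v‖`, so that `|u (f^[n] x) - u x| ≤ 2 C ‖u ∘ f - u‖` for every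
continuous `u`. If `f` is not periodic, some point `z` has no period `≤ 2n`, so `z` has an open
neighbourhood `U` that no orbit visits twice within `2n` steps. For a bump `h` at `z` supported
in `U`, the function `u = ∑ₖ min(k, 2n - k) · h ∘ f^[k]` sees at most one nonzero term at each
point, so `‖u ∘ f - u‖ ≤ 1`; yet `u (f^[n] w) - u w = n` for a preimage `w` of `z` under `f^[2n]`.
Letting `n → ∞` contradicts the bound above.
-/

open Finset Function Filter Topology

def coboundaries {X : Type*} [TopologicalSpace X] (f : X → X) : Set C(X, ℝ) :=
  {φ | ∃ u : C(X, ℝ), ∀ x, φ x = u (f x) - u x}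

theorem birkhoffSum_comp_sub {α G : Type*} [AddCommGroup G] (f : α → α) (u : α → G) (n : ℕ)
    (x : α) : birkhoffSum f (fun y ↦ u (f y) - u y) n x = u (f^[n] x) - u x := by
  simp only [birkhoffSum, ← iterate_succ_apply' f]
  exact sum_range_sub (fun k ↦ u (f^[k] x)) n

theorem continuous_birkhoffSum {X G : Type*} [TopologicalSpace X] [AddCommMonoid G]
    [TopologicalSpace G] [ContinuousAdd G] {f : X → X} {g : X → G} (hf : Continuous f)
    (hg : Continuous g) (n : ℕ) : Continuous (birkhoffSum f g n) :=
  continuous_finsetSum _ fun k _ ↦ hg.comp (hf.iterate k)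

theorem coboundaries_eq_of_iterate_eq_id {X : Type*} [TopologicalSpace X] {f : X → X}
    (hf : Continuous f) {q : ℕ} (hq : 0 < q) (hfq : f^[q] = id) :
    coboundaries f = {φ : C(X, ℝ) | ∀ x, birkhoffSum f φ q x = 0} := by
  ext φ
  constructor
  · rintro ⟨u, hu⟩ x
    have hφ : ⇑φ = fun y ↦ u (f y) - u y := funext hu
    rw [hφ, birkhoffSum_comp_sub, hfq, id, sub_self]
  · intro hφ
    refine ⟨⟨fun x ↦ -(q : ℝ)⁻¹ * ∑ j ∈ range q, birkhoffSum f φ j x,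
      continuous_const.mul <| continuous_finsetSum _ fun j _ ↦
        continuous_birkhoffSum hf φ.continuous j⟩,
      fun x ↦ ?_⟩
    have hsum : ∑ j ∈ range q, (birkhoffSum f φ j (f x) - birkhoffSum f φ j x) = -(q * φ x) := by
      simp only [birkhoffSum_apply_sub_birkhoffSum, sum_sub_distrib, sum_const, card_range,
        nsmul_eq_mul]
      rw [← birkhoffSum, hφ x, zero_sub]
    simp only [ContinuousMap.coe_mk]
    rw [← mul_sub, ← sum_sub_distrib, hsum]
    field_simp

theorem isClosed_coboundaries_of_iterate_eq_id {X : Type*} [TopologicalSpace X] {f : X → X}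
    (hf : Continuous f) {q : ℕ} (hq : 0 < q) (hfq : f^[q] = id) :
    IsClosed (coboundaries f) := by
  rw [coboundaries_eq_of_iterate_eq_id hf hq hfq, Set.ofPred_forall]
  exact isClosed_iInter fun x ↦ isClosed_eq
    (continuous_finsetSum _ fun k _ ↦ continuous_eval_const _) continuous_const

theorem ContinuousLinearMap.exists_preimage_norm_le_of_isClosed_range {𝕜 E F : Type*}
    [NontriviallyNormedField 𝕜] [NormedAddCommGroup E] [NormedSpace 𝕜 E] [CompleteSpace E]
    [NormedAddCommGroup F] [NormedSpace 𝕜 F] [CompleteSpace F] (L : E →L[𝕜] F)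
    (hL : IsClosed (Set.range L)) : ∃ C > 0, ∀ x, ∃ x', L x' = L x ∧ ‖x'‖ ≤ C * ‖L x‖ := by
  have : CompleteSpace (LinearMap.range (L : E →ₗ[𝕜] F)) :=
    (show IsClosed (LinearMap.range (L : E →ₗ[𝕜] F) : Set F) from hL).isComplete.completeSpace_coe
  obtain ⟨C, hC, hpre⟩ := L.rangeRestrict.exists_preimage_norm_le L.surjective_rangeRestrict
  exact ⟨C, hC, fun x ↦ (hpre (L.rangeRestrict x)).imp fun x' h ↦ ⟨congrArg Subtype.val h.1, h.2⟩⟩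

theorem exists_abs_iterate_sub_le_of_isClosed_coboundaries {X : Type*} [TopologicalSpace X]
    [CompactSpace X] {f : X → X} (hf : Continuous f) (h : IsClosed (coboundaries f)) :
    ∃ C > 0, ∀ (u : C(X, ℝ)) (n : ℕ) (x : X),
      |u (f^[n] x) - u x| ≤ C * ‖u.comp ⟨f, hf⟩ - u‖ := by
  set L : C(X, ℝ) →L[ℝ] C(X, ℝ) :=
    ContinuousMap.compCLM ℝ ℝ ⟨f, hf⟩ - ContinuousLinearMap.id ℝ _
  have hL : Set.range L = coboundaries f := by
    ext φ
    exact ⟨fun ⟨u, hu⟩ ↦ ⟨u, fun x ↦ by simp [← hu, L]⟩,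
      fun ⟨u, hu⟩ ↦ ⟨u, by ext x; simp [hu, L]⟩⟩
  obtain ⟨C, hC, hpre⟩ := L.exists_preimage_norm_le_of_isClosed_range (hL ▸ h)
  refine ⟨2 * C, by positivity, fun u n x ↦ ?_⟩
  obtain ⟨v, hv, hvC⟩ := hpre u
  have hinv : ⇑(u - v) ∘ f = ⇑(u - v) := by
    have h0 : L (u - v) = 0 := by rw [map_sub, hv, sub_self]
    funext y
    simpa [L, sub_eq_zero] using DFunLike.congr_fun h0 y
  have horbit := congrFun (iterate_invariant hinv n) x
  simp only [comp_apply, ContinuousMap.sub_apply] at horbit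
  calc |u (f^[n] x) - u x| = |v (f^[n] x) - v x| := by congr 1; linarith
    _ ≤ ‖v‖ + ‖v‖ :=
      (abs_sub _ _).trans (add_le_add (v.norm_coe_le_norm _) (v.norm_coe_le_norm _))
    _ ≤ 2 * C * ‖u.comp ⟨f, hf⟩ - u‖ := by
      rw [← two_mul, mul_assoc]
      gcongr
      exact hvC.trans_eq rfl

theorem Function.iterate_factorial_eq_id_of_exists_isPeriodicPt {α : Type*} {f : α → α} {N : ℕ}
    (h : ∀ x, ∃ p ∈ Icc 1 N, IsPeriodicPt f p x) : f^[N.factorial] = id :=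
  funext fun x ↦ by
    obtain ⟨p, hp, hpx⟩ := h x
    rw [mem_Icc] at hp
    exact (hpx.trans_dvd (Nat.dvd_factorial hp.1 hp.2)).eq

theorem exists_isOpen_mapsTo_iterate_compl {X : Type*} [TopologicalSpace X] [T2Space X]
    {f : X → X} (hf : Continuous f) {z : X} {N : ℕ} (hz : ∀ p ∈ Icc 1 N, ¬IsPeriodicPt f p z) :
    ∃ U, IsOpen U ∧ z ∈ U ∧ ∀ p ∈ Icc 1 N, Set.MapsTo f^[p] U Uᶜ := by
  have hev : ∀ᶠ w : X × X in 𝓝 z ×ˢ 𝓝 z, ∀ p ∈ Icc 1 N, f^[p] w.1 ≠ w.2 := by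
    rw [eventually_all_finset]
    intro p hp
    rw [← nhds_prod_eq]
    exact (isOpen_ne_fun ((hf.iterate p).comp continuous_fst) continuous_snd).mem_nhds (hz p hp)
  obtain ⟨V, hV, hVwand⟩ := eventually_prod_self_iff'.mp hev
  obtain ⟨U, hUV, hUo, hzU⟩ := mem_nhds_iff.mp hV
  exact ⟨U, hUo, hzU, fun p hp w hw hpw ↦ hVwand w (hUV hw) _ (hUV hpw) p hp rfl⟩

theorem eq_of_iterate_mem_of_mapsTo_compl {α : Type*} {f : α → α} {U : Set α} {N : ℕ}
    (hU : ∀ p ∈ Icc 1 N, Set.MapsTo f^[p] U Uᶜ) {y : α} {i j : ℕ} (hi : i ≤ N) (hj : j ≤ N)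
    (hiU : f^[i] y ∈ U) (hjU : f^[j] y ∈ U) : i = j := by
  wlog hij : i < j generalizing i j
  · exact ((not_lt.mp hij).lt_or_eq.elim (this hj hi hjU hiU) id).symm
  have hmaps := hU (j - i) (mem_Icc.mpr ⟨by omega, by omega⟩) hiU
  rw [← iterate_add_apply, Nat.sub_add_cancel hij.le] at hmaps
  exact absurd hjU hmaps

theorem Finset.abs_sum_le_of_subsingleton {ι : Type*} {s : Finset ι} {a : ι → ℝ} {C : ℝ}
    (hC : 0 ≤ C) (ha : ∀ i ∈ s, |a i| ≤ C)
    (hsub : ∀ i ∈ s, ∀ j ∈ s, a i ≠ 0 → a j ≠ 0 → i = j) : |∑ i ∈ s, a i| ≤ C := by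
  by_cases h : ∃ i ∈ s, a i ≠ 0
  · obtain ⟨i, hi, hai⟩ := h
    rw [sum_eq_single_of_mem i hi fun j hj hji ↦ by_contra fun haj ↦ hji (hsub j hj i hi haj hai)]
    exact ha i hi
  · push Not at h
    rw [sum_eq_zero h, abs_zero]
    exact hC

theorem Finset.sum_range_succ_mul_shift_sub {R : Type*} [CommRing R] {g : ℕ → R} {N : ℕ}
    (h0 : g 0 = 0) (hN : g N = 0) (a : ℕ → R) :
    ∑ k ∈ range (N + 1), g k * a (k + 1) - ∑ k ∈ range (N + 1), g k * a k =
      ∑ k ∈ range N, (g k - g (k + 1)) * a (k + 1) := by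
  rw [sum_range_succ, sum_range_succ', hN, h0]
  simp only [sub_mul, sum_sub_distrib]
  ring

theorem exists_continuous_eq_along_orbit_of_not_isPeriodicPt {X : Type*} [TopologicalSpace X]
    [T4Space X] {f : X → X} (hf : Continuous f) {z : X} {N : ℕ}
    (hz : ∀ p ∈ Icc 1 N, ¬IsPeriodicPt f p z)
    {g : ℕ → ℝ} (hg0 : g 0 = 0) (hgN : g N = 0) (hg : ∀ k, |g k - g (k + 1)| ≤ 1) :
    ∃ u : C(X, ℝ), (∀ y, |u (f y) - u y| ≤ 1) ∧ ∀ y, ∀ j ≤ N, f^[j] y = z → u y = g j := by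
  obtain ⟨U, hUo, hzU, hU⟩ := exists_isOpen_mapsTo_iterate_compl hf hz
  obtain ⟨h, hh0, hh1, hh⟩ := exists_continuous_zero_one_of_isClosed hUo.isClosed_compl
    isClosed_singleton (Set.disjoint_singleton_right.mpr (Set.notMem_compl_iff.mpr hzU))
  have hsupp : ∀ y, h y ≠ 0 → y ∈ U := fun y hy ↦ by_contra fun hyU ↦ hy (hh0 hyU)
  let u : C(X, ℝ) := ⟨fun y ↦ ∑ k ∈ range (N + 1), g k * h (f^[k] y),
    continuous_finsetSum _ fun k _ ↦ continuous_const.mul (h.continuous.comp (hf.iterate k))⟩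
  refine ⟨u, fun y ↦ ?_, fun y j hj hjz ↦ ?_⟩
  · have hu : u (f y) - u y = ∑ k ∈ range N, (g k - g (k + 1)) * h (f^[k + 1] y) := by
      simp only [u, ContinuousMap.coe_mk, ← iterate_succ_apply]
      exact sum_range_succ_mul_shift_sub hg0 hgN fun k ↦ h (f^[k] y)
    rw [hu]
    refine abs_sum_le_of_subsingleton zero_le_one (fun k _ ↦ ?_) fun i hi j hj hi0 hj0 ↦ ?_
    · rw [abs_mul, abs_of_nonneg (hh (f^[k + 1] y)).1]
      exact mul_le_one₀ (hg k) (hh _).1 (hh _).2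
    · have := eq_of_iterate_mem_of_mapsTo_compl hU (y := y) (i := i + 1) (j := j + 1)
        (mem_range.mp hi) (mem_range.mp hj)
        (hsupp _ (right_ne_zero_of_mul hi0)) (hsupp _ (right_ne_zero_of_mul hj0))
      omega
  · have hzj : h (f^[j] y) = 1 := by rw [hjz]; exact hh1 rfl
    simp only [u, ContinuousMap.coe_mk]
    rw [sum_eq_single_of_mem j (mem_range.mpr (by omega)), hzj, mul_one]
    intro k hk hkj
    have : h (f^[k] y) = 0 := by_contra fun hk0 ↦ hkj <|
      eq_of_iterate_mem_of_mapsTo_compl hU (Nat.lt_succ_iff.mp (mem_range.mp hk)) hj (hsupp _ hk0)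
        (hjz ▸ hzU)
    rw [this, mul_zero]

theorem exists_norm_le_one_iterate_sub_eq {X : Type*} [TopologicalSpace X] [CompactSpace X]
    [T2Space X] {f : X → X} (hf : Continuous f) (hsurj : Surjective f)
    (hper : ∀ q, 0 < q → f^[q] ≠ id) (n : ℕ) :
    ∃ u : C(X, ℝ), ‖u.comp ⟨f, hf⟩ - u‖ ≤ 1 ∧ ∃ w, u (f^[n] w) - u w = n := by
  obtain ⟨z, hz⟩ : ∃ z, ∀ p ∈ Icc 1 (2 * n), ¬IsPeriodicPt f p z := by
    by_contra! h
    exact hper _ (2 * n).factorial_pos (iterate_factorial_eq_id_of_exists_isPeriodicPt h)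
  let g : ℕ → ℝ := fun k ↦ (min k (2 * n - k) : ℕ)
  have hg : ∀ k, |g k - g (k + 1)| ≤ 1 := fun k ↦ by
    have h₁ : min (k + 1) (2 * n - (k + 1)) ≤ min k (2 * n - k) + 1 := by omega
    have h₂ : min k (2 * n - k) ≤ min (k + 1) (2 * n - (k + 1)) + 1 := by omega
    rw [abs_sub_le_iff]
    constructor <;> simp only [g, sub_le_iff_le_add'] <;> exact_mod_cast ‹_›
  obtain ⟨u, hu, hug⟩ :=
    exists_continuous_eq_along_orbit_of_not_isPeriodicPt hf hz (by simp [g]) (by simp [g]) hg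
  obtain ⟨w, hw⟩ := hsurj.iterate (2 * n) z
  refine ⟨u, (ContinuousMap.norm_le _ zero_le_one).mpr fun y ↦ hu y, w, ?_⟩
  rw [hug (f^[n] w) n (by omega) (by rw [← iterate_add_apply, ← two_mul, hw]),
    hug w (2 * n) le_rfl hw]
  simp [g, two_mul]

/-- **Theorem A.** A homeomorphism `f` of a compact metric space is cohomologically
`C⁰`-stable (its space of continuous coboundaries is closed in the uniform norm) if and
only if `f` is periodic. -/
theorem coboundaries_closed_iff_periodic
    {M : Type*} [MetricSpace M] [CompactSpace M] (f : M ≃ₜ M) :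
    IsClosed {φ : C(M, ℝ) | ∃ u : C(M, ℝ), ∀ x, φ x = u (f x) - u x} ↔
      ∃ q : ℕ, 1 ≤ q ∧ (⇑f)^[q] = id := by
  refine ⟨fun hclosed ↦ ?_, fun ⟨q, hq, hfq⟩ ↦
    isClosed_coboundaries_of_iterate_eq_id f.continuous hq hfq⟩
  by_contra! hper
  obtain ⟨C, hC0, hC⟩ := exists_abs_iterate_sub_le_of_isClosed_coboundaries f.continuous hclosed
  obtain ⟨n, hn⟩ := exists_nat_gt C
  obtain ⟨u, hu, w, hw⟩ := exists_norm_le_one_iterate_sub_eq f.continuous f.surjective hper n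
  have hbound := hC u n w
  rw [hw, Nat.abs_cast] at hbound
  linarith [mul_le_of_le_one_right hC0.le hu]
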